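/- The linear map e is Dic∞-equivariant and satisfies: (1) e ∘ coev = 0 and ev ∘ e = 0; (2) e ∘ e = −2·e; (3) (id ⊗ ev) ∘ (e ⊗ id) ∘ (id ⊗ coev) = id_{ℂ²}; and (4) (ev ⊗ id) ∘ (id ⊗ e) ∘ (coev ⊗ id) = id_{ℂ²}. -/

import Mathlib

/-!
Write `e (v ⊗ w) = -β(v, w) • s` with `β(v, w) = v₀w₁ + v₁w₀` and `s = v₁⊗v₂ + v₂⊗v₁`.
A diagonal matrix `diag(a, b)` and an antidiagonal matrix with entries `b, c` rescale `β` and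
`s` by the same factor (`ab`, resp. `bc`), so `e` commutes with `g ⊗ g` for both generators of
`Dic∞`, hence for every element of the group. Since `e s = -2 • s`, `ev s = 0` and
`e (coev 1) = 0`, relations (1) and (2) follow at once; the zigzag identities (3) and (4) are
checked coordinatewise.
-/

open scoped TensorProduct
open Matrix

noncomputable section

/-- `ℂ²`, the standard two-dimensional complex vector space. -/
abbrev V2 : Type := Fin 2 → ℂ

/-- The standard representation of a subgroup `G ≤ GL₂(ℂ)` on `ℂ²`, by matrix-vector
multiplication. -/
def stdRep (G : Subgroup (GL (Fin 2) ℂ)) : Representation ℂ G V2 where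
  toFun g := Matrix.toLin' ((g : GL (Fin 2) ℂ) : Matrix (Fin 2) (Fin 2) ℂ)
  map_one' := by
    simp only [OneMemClass.coe_one, Units.val_one, Matrix.toLin'_one]
    rfl
  map_mul' g h := by
    simp only [MulMemClass.coe_mul, Units.val_mul, Matrix.toLin'_mul]
    rfl

/-- The standard basis vectors `v₁ = bv 0`, `v₂ = bv 1` of `ℂ²`. -/
def bv (s : Fin 2) : V2 := Pi.single s 1

/-- The evaluation map `ev : ℂ²⊗ℂ² → ℂ`, determined by `ev(v₁⊗v₁) = ev(v₂⊗v₂) = 0`,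
`ev(v₁⊗v₂) = 1` and `ev(v₂⊗v₁) = −1`. -/
def evMap : (V2 ⊗[ℂ] V2) →ₗ[ℂ] ℂ :=
  TensorProduct.lift
    (LinearMap.mk₂ ℂ (fun v w => v 0 * w 1 - v 1 * w 0)
      (fun m₁ m₂ n => by simp only [Pi.add_apply]; ring)
      (fun c m n => by simp only [Pi.smul_apply, smul_eq_mul]; ring)
      (fun m n₁ n₂ => by simp only [Pi.add_apply]; ring)
      (fun c m n => by simp only [Pi.smul_apply, smul_eq_mul]; ring))

/-- The coevaluation map `coev : ℂ → ℂ²⊗ℂ²`, `1 ↦ v₂⊗v₁ − v₁⊗v₂`. -/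
def coevMap : ℂ →ₗ[ℂ] (V2 ⊗[ℂ] V2) :=
  LinearMap.toSpanSingleton ℂ (V2 ⊗[ℂ] V2) (bv 1 ⊗ₜ[ℂ] bv 0 - bv 0 ⊗ₜ[ℂ] bv 1)

/-- The map `e : ℂ²⊗ℂ² → ℂ²⊗ℂ²` with `e(v₁⊗v₁) = e(v₂⊗v₂) = 0` and
`e(v₁⊗v₂) = e(v₂⊗v₁) = −(v₁⊗v₂ + v₂⊗v₁)`. -/
def eMap : (V2 ⊗[ℂ] V2) →ₗ[ℂ] (V2 ⊗[ℂ] V2) :=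
  TensorProduct.lift
    (LinearMap.mk₂ ℂ
      (fun v w => (-(v 0 * w 1 + v 1 * w 0)) • (bv 0 ⊗ₜ[ℂ] bv 1 + bv 1 ⊗ₜ[ℂ] bv 0))
      (fun m₁ m₂ n => by
        simp only [Pi.add_apply]
        rw [← add_smul]; ring_nf)
      (fun c m n => by
        simp only [Pi.smul_apply, smul_eq_mul]
        rw [smul_smul]; ring_nf)
      (fun m n₁ n₂ => by
        simp only [Pi.add_apply]
        rw [← add_smul]; ring_nf)
      (fun c m n => by
        simp only [Pi.smul_apply, smul_eq_mul]
        rw [smul_smul]; ring_nf))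

open TensorProduct

theorem MonoidHom.commute_of_mem_closure {G M : Type*} [Group G] [Monoid M] (ρ : G →* M)
    {f : M} {S : Set G} (hS : ∀ s ∈ S, Commute (ρ s) f) {g : G}
    (hg : g ∈ Subgroup.closure S) : Commute (ρ g) f := by
  induction hg using Subgroup.closure_induction with
  | mem s hs => exact hS s hs
  | one => simp
  | mul x y _ _ hx hy => simpa using hx.mul_left hy
  | inv x _ hx =>
    have h : Commute ↑(ρ.toHomUnits x)⁻¹ f := hx.units_inv_left
    rwa [← map_inv, MonoidHom.coe_toHomUnits] at h

@[simp] lemma bv_apply (s t : Fin 2) : bv s t = if t = s then 1 else 0 := Pi.single_apply s 1 t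

def symTensor : V2 ⊗[ℂ] V2 := bv 0 ⊗ₜ bv 1 + bv 1 ⊗ₜ bv 0

lemma eMap_tmul (v w : V2) : eMap (v ⊗ₜ w) = (-(v 0 * w 1 + v 1 * w 0)) • symTensor := rfl

lemma evMap_tmul (v w : V2) : evMap (v ⊗ₜ w) = v 0 * w 1 - v 1 * w 0 := rfl

lemma toLin'_apply_fin_two {R : Type*} [CommSemiring R] (M : Matrix (Fin 2) (Fin 2) R)
    (v : Fin 2 → R) (i : Fin 2) : Matrix.toLin' M v i = M i 0 * v 0 + M i 1 * v 1 := by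
  simp [Matrix.mulVec, dotProduct, Fin.sum_univ_two]

lemma toLin'_bv (M : Matrix (Fin 2) (Fin 2) ℂ) (j : Fin 2) :
    Matrix.toLin' M (bv j) = M 0 j • bv 0 + M 1 j • bv 1 := by
  ext i
  fin_cases i <;> simp [bv]

lemma commute_map_eMap_of_scale (f : V2 →ₗ[ℂ] V2) (c : ℂ)
    (hf : ∀ v w, f v 0 * f w 1 + f v 1 * f w 0 = c * (v 0 * w 1 + v 1 * w 0))
    (hsym : map f f symTensor = c • symTensor) :
    Commute (map f f) eMap := by
  refine TensorProduct.ext' fun v w => ?_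
  simp only [Module.End.mul_apply, map_tmul, eMap_tmul, map_smul, hf, hsym, smul_smul]
  ring_nf

lemma commute_map_diagonal_eMap (a b : ℂ) :
    Commute (map (Matrix.toLin' !![a, 0; 0, b]) (Matrix.toLin' !![a, 0; 0, b])) eMap := by
  refine commute_map_eMap_of_scale _ (a * b) (fun v w => ?_) ?_
  · simp only [toLin'_apply_fin_two]
    simp
    ring
  · simp only [symTensor, map_add, map_tmul, toLin'_bv]
    simp [← smul_tmul', smul_smul, mul_comm, add_comm]

lemma commute_map_antidiagonal_eMap (b c : ℂ) :
    Commute (map (Matrix.toLin' !![0, b; c, 0]) (Matrix.toLin' !![0, b; c, 0])) eMap := by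
  refine commute_map_eMap_of_scale _ (b * c) (fun v w => ?_) ?_
  · simp only [toLin'_apply_fin_two]
    simp
    ring
  · simp only [symTensor, map_add, map_tmul, toLin'_bv]
    simp [← smul_tmul', smul_smul, mul_comm, add_comm]

def glRep : Representation ℂ (GL (Fin 2) ℂ) V2 :=
  Matrix.toLinAlgEquiv'.toMonoidHom.comp (Units.coeHom _)

lemma glRep_apply (g : GL (Fin 2) ℂ) : glRep g = Matrix.toLin' g := rfl

lemma eMap_symTensor : eMap symTensor = (-2 : ℂ) • symTensor := by
  nth_rw 1 [symTensor]
  rw [map_add, eMap_tmul, eMap_tmul, ← add_smul]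
  congr 1
  norm_num

lemma evMap_symTensor : evMap symTensor = 0 := by
  simp [symTensor, evMap_tmul]

lemma eMap_comp_coevMap : eMap ∘ₗ coevMap = 0 := by
  ext
  simp [coevMap, eMap_tmul]

lemma evMap_comp_eMap : evMap ∘ₗ eMap = 0 := by
  refine TensorProduct.ext' fun v w => ?_
  simp [eMap_tmul, evMap_symTensor]

lemma eMap_comp_eMap : eMap ∘ₗ eMap = (-2 : ℂ) • eMap := by
  refine TensorProduct.ext' fun v w => ?_
  simp [eMap_tmul, eMap_symTensor, smul_smul, mul_comm]

lemma eMap_zigzag_right :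
    (TensorProduct.rid ℂ V2).toLinearMap ∘ₗ
        TensorProduct.map LinearMap.id evMap ∘ₗ
        (TensorProduct.assoc ℂ V2 V2 V2).toLinearMap ∘ₗ
        TensorProduct.map eMap LinearMap.id ∘ₗ
        (TensorProduct.assoc ℂ V2 V2 V2).symm.toLinearMap ∘ₗ
        TensorProduct.map LinearMap.id coevMap ∘ₗ
        (TensorProduct.rid ℂ V2).symm.toLinearMap = LinearMap.id := by
  refine LinearMap.ext fun v => funext fun j => ?_
  fin_cases j <;>
    simp [coevMap, symTensor, eMap_tmul, evMap_tmul, tmul_sub, add_tmul, ← smul_tmul', -neg_smul]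

lemma eMap_zigzag_left :
    (TensorProduct.lid ℂ V2).toLinearMap ∘ₗ
        TensorProduct.map evMap LinearMap.id ∘ₗ
        (TensorProduct.assoc ℂ V2 V2 V2).symm.toLinearMap ∘ₗ
        TensorProduct.map LinearMap.id eMap ∘ₗ
        (TensorProduct.assoc ℂ V2 V2 V2).toLinearMap ∘ₗ
        TensorProduct.map coevMap LinearMap.id ∘ₗ
        (TensorProduct.lid ℂ V2).symm.toLinearMap = LinearMap.id := by
  refine LinearMap.ext fun v => funext fun j => ?_
  fin_cases j <;>
    simp [coevMap, symTensor, eMap_tmul, evMap_tmul, sub_tmul, tmul_add, tmul_smul, -neg_smul]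

theorem eMap_relations_general
    (θ : ℝ) (X A : GL (Fin 2) ℂ)
    (hX : (X : Matrix (Fin 2) (Fin 2) ℂ) = !![0, -1; 1, 0])
    (hA : (A : Matrix (Fin 2) (Fin 2) ℂ) =
      !![Complex.exp (θ * Complex.I), 0; 0, Complex.exp (-(θ * Complex.I))])
    (G : Subgroup (GL (Fin 2) ℂ)) (hG : G = Subgroup.closure {X, A}) :
    -- `e` is `Dic∞`-equivariant:
    (∀ (g : G) (z : V2 ⊗[ℂ] V2),
      eMap (((stdRep G).tprod (stdRep G)) g z) = ((stdRep G).tprod (stdRep G)) g (eMap z)) ∧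
    -- (1)
    (eMap ∘ₗ coevMap = 0 ∧ evMap ∘ₗ eMap = 0) ∧
    -- (2)
    (eMap ∘ₗ eMap = (-2 : ℂ) • eMap) ∧
    -- (3)
    ((TensorProduct.rid ℂ V2).toLinearMap ∘ₗ
        TensorProduct.map LinearMap.id evMap ∘ₗ
        (TensorProduct.assoc ℂ V2 V2 V2).toLinearMap ∘ₗ
        TensorProduct.map eMap LinearMap.id ∘ₗ
        (TensorProduct.assoc ℂ V2 V2 V2).symm.toLinearMap ∘ₗ
        TensorProduct.map LinearMap.id coevMap ∘ₗ
        (TensorProduct.rid ℂ V2).symm.toLinearMap = LinearMap.id) ∧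
    -- (4)
    ((TensorProduct.lid ℂ V2).toLinearMap ∘ₗ
        TensorProduct.map evMap LinearMap.id ∘ₗ
        (TensorProduct.assoc ℂ V2 V2 V2).symm.toLinearMap ∘ₗ
        TensorProduct.map LinearMap.id eMap ∘ₗ
        (TensorProduct.assoc ℂ V2 V2 V2).toLinearMap ∘ₗ
        TensorProduct.map coevMap LinearMap.id ∘ₗ
        (TensorProduct.lid ℂ V2).symm.toLinearMap = LinearMap.id) := by
  subst hG
  have hXe : Commute (glRep.tprod glRep X) eMap := by
    simpa [glRep_apply, Representation.tprod_apply, hX] using commute_map_antidiagonal_eMap (-1) 1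
  have hAe : Commute (glRep.tprod glRep A) eMap := by
    simpa [glRep_apply, Representation.tprod_apply, hA] using commute_map_diagonal_eMap _ _
  refine ⟨fun g z => ?_, ⟨eMap_comp_coevMap, evMap_comp_eMap⟩, eMap_comp_eMap, eMap_zigzag_right,
    eMap_zigzag_left⟩
  have hg : Commute (glRep.tprod glRep g) eMap :=
    (glRep.tprod glRep).commute_of_mem_closure (S := {X, A})
      (by rintro s (rfl | rfl); exacts [hXe, hAe]) g.2
  exact (LinearMap.congr_fun hg z).symm

/-- The map `e` is `Dic∞`-equivariant and satisfies: (1) `e ∘ coev = 0` and `ev ∘ e = 0`;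
(2) `e ∘ e = −2·e`; (3) `(id ⊗ ev) ∘ (e ⊗ id) ∘ (id ⊗ coev) = id`; and
(4) `(ev ⊗ id) ∘ (id ⊗ e) ∘ (coev ⊗ id) = id`. -/
theorem eMap_relations
    (θ : ℝ) (hθ : Irrational (θ / Real.pi)) (X A : GL (Fin 2) ℂ)
    (hX : (X : Matrix (Fin 2) (Fin 2) ℂ) = !![0, -1; 1, 0])
    (hA : (A : Matrix (Fin 2) (Fin 2) ℂ) =
      !![Complex.exp (θ * Complex.I), 0; 0, Complex.exp (-(θ * Complex.I))])
    (G : Subgroup (GL (Fin 2) ℂ)) (hG : G = Subgroup.closure {X, A}) :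
    -- `e` is `Dic∞`-equivariant:
    (∀ (g : G) (z : V2 ⊗[ℂ] V2),
      eMap (((stdRep G).tprod (stdRep G)) g z) = ((stdRep G).tprod (stdRep G)) g (eMap z)) ∧
    -- (1)
    (eMap ∘ₗ coevMap = 0 ∧ evMap ∘ₗ eMap = 0) ∧
    -- (2)
    (eMap ∘ₗ eMap = (-2 : ℂ) • eMap) ∧
    -- (3)
    ((TensorProduct.rid ℂ V2).toLinearMap ∘ₗ
        TensorProduct.map LinearMap.id evMap ∘ₗ
        (TensorProduct.assoc ℂ V2 V2 V2).toLinearMap ∘ₗ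
        TensorProduct.map eMap LinearMap.id ∘ₗ
        (TensorProduct.assoc ℂ V2 V2 V2).symm.toLinearMap ∘ₗ
        TensorProduct.map LinearMap.id coevMap ∘ₗ
        (TensorProduct.rid ℂ V2).symm.toLinearMap = LinearMap.id) ∧
    -- (4)
    ((TensorProduct.lid ℂ V2).toLinearMap ∘ₗ
        TensorProduct.map evMap LinearMap.id ∘ₗ
        (TensorProduct.assoc ℂ V2 V2 V2).symm.toLinearMap ∘ₗ
        TensorProduct.map LinearMap.id eMap ∘ₗ
        (TensorProduct.assoc ℂ V2 V2 V2).toLinearMap ∘ₗ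
        TensorProduct.map coevMap LinearMap.id ∘ₗ
        (TensorProduct.lid ℂ V2).symm.toLinearMap = LinearMap.id) :=
  eMap_relations_general θ X A hX hA G hG
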